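/- arXiv:2208.07738 — 2 statements merged into one kernel-verified Lean document; each statement's English description precedes it below -/
import Mathlib

section
/- Let Q be a finite acyclic quiver, d a summand vector with d_v = 0 at some vertex v. Let Q̄ be the quiver obtained by deleting v and replacing each length-2 path α β through v (α ending at v, β starting at v) by a new arrow from s(α) to t(β), keeping all other arrows. Then End(P_{Q,d}) ≅ End(P_{Q̄,d̄}) as k-algebras, where d̄ is d restricted to Q₀∖{v}. -/
/-- A representation of a quiver `Q` over a field `k`: a vector space at each vertex
and a linear map for each arrow. -/
structure QRep (k : Type) [Field k] (Q : Type) [Quiver.{0} Q] where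
  V : Q → Type
  instAddCommGroup : ∀ i, AddCommGroup (V i)
  instModule : ∀ i, Module k (V i)
  map : ∀ {i j : Q}, (i ⟶ j) → (V i →ₗ[k] V j)

attribute [instance] QRep.instAddCommGroup QRep.instModule

/-- A homomorphism of quiver representations. -/
@[ext]
structure QRepHom {k : Type} [Field k] {Q : Type} [Quiver.{0} Q] (M N : QRep k Q) where
  app : ∀ i, M.V i →ₗ[k] N.V i
  comm : ∀ {i j : Q} (a : i ⟶ j), (N.map a).comp (app i) = (app j).comp (M.map a)

namespace QRepHom

variable {k : Type} [Field k] {Q : Type} [Quiver.{0} Q] {M N P : QRep k Q}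

/-- Composition of homomorphisms of representations. -/
def comp (f : QRepHom N P) (g : QRepHom M N) : QRepHom M P where
  app i := (f.app i).comp (g.app i)
  comm {i j} a := by
    rw [← LinearMap.comp_assoc, f.comm, LinearMap.comp_assoc, g.comm,
      LinearMap.comp_assoc]

/-- The identity homomorphism. -/
def id (M : QRep k Q) : QRepHom M M where
  app _ := LinearMap.id
  comm _ := rfl

instance : Zero (QRepHom M N) :=
  ⟨{ app := fun _ => 0, comm := fun _ => by simp }⟩

instance : Add (QRepHom M N) :=
  ⟨fun f g =>
    { app := fun i => f.app i + g.app i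
      comm := fun a => by
        simp only [LinearMap.comp_add, LinearMap.add_comp, f.comm, g.comm] }⟩

instance : Neg (QRepHom M N) :=
  ⟨fun f =>
    { app := fun i => -f.app i
      comm := fun a => by
        simp only [LinearMap.comp_neg, LinearMap.neg_comp, f.comm] }⟩

instance : Sub (QRepHom M N) :=
  ⟨fun f g =>
    { app := fun i => f.app i - g.app i
      comm := fun a => by
        simp only [LinearMap.comp_sub, LinearMap.sub_comp, f.comm, g.comm] }⟩

instance : SMul k (QRepHom M N) :=
  ⟨fun c f =>
    { app := fun i => c • f.app i
      comm := fun a => by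
        simp only [LinearMap.comp_smul, LinearMap.smul_comp, f.comm] }⟩

instance : One (QRepHom M M) := ⟨id M⟩

instance : Mul (QRepHom M M) := ⟨comp⟩

/-- A homomorphism of representations is an isomorphism if it has a two-sided
inverse. -/
def IsIso (f : QRepHom M N) : Prop :=
  ∃ g : QRepHom N M, f.comp g = id N ∧ g.comp f = id M

end QRepHom

/-- The radical of the category of representations:
`Rad(X,Y) = {f : X → Y | ∀ g : Y → X, 1_X - g ∘ f is an isomorphism}`. -/
def QRad {k : Type} [Field k] {Q : Type} [Quiver.{0} Q] (M N : QRep k Q) :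
    Set (QRepHom M N) :=
  {f | ∀ g : QRepHom N M, QRepHom.IsIso (QRepHom.id M - g.comp f)}

/-- The indecomposable projective representation `P(i)`: at vertex `m` it has basis
the paths `i ⇝ m`, with arrows acting by composition of paths. -/
noncomputable def QProj (k : Type) [Field k] {Q : Type} [Quiver.{0} Q] (i : Q) : QRep k Q where
  V m := Quiver.Path i m →₀ k
  instAddCommGroup _ := inferInstance
  instModule _ := inferInstance
  map a := Finsupp.lmapDomain k k fun p => p.cons a

/-- The projective representation `P_{Q,d} = ⊕_{i ∈ Q₀} P(i)^{d_i}` with summand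
vector `d`. -/
noncomputable def QProjD (k : Type) [Field k] (Q : Type) [Quiver.{0} Q] (d : Q → ℕ) : QRep k Q where
  V m := ∀ i : Q, Fin (d i) → (Quiver.Path i m →₀ k)
  instAddCommGroup _ := inferInstance
  instModule _ := inferInstance
  map {m _m'} a := LinearMap.pi fun i => LinearMap.pi fun s =>
    (Finsupp.lmapDomain k k fun p : Quiver.Path i m => p.cons a).comp
      ((LinearMap.proj s :
          (Fin (d i) → (Quiver.Path i m →₀ k)) →ₗ[k] (Quiver.Path i m →₀ k)).comp
        (LinearMap.proj i :
          (∀ j : Q, Fin (d j) → (Quiver.Path j m →₀ k)) →ₗ[k]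
            (Fin (d i) → (Quiver.Path i m →₀ k))))

/-- A quiver is acyclic if the only paths from a vertex to itself are constant. -/
def QAcyclic (Q : Type) [Quiver.{0} Q] : Prop :=
  ∀ (i : Q) (p : Quiver.Path i i), p = Quiver.Path.nil

/-- The quiver `Q̄` obtained from `Q` by removing the vertex `v` and replacing every
length-two path `α β` through `v` by a new arrow, keeping all other arrows. -/
def VertexRemoved (Q : Type) [Quiver.{0} Q] (v : Q) : Type := {x : Q // x ≠ v}

instance (Q : Type) [Quiver.{0} Q] (v : Q) : Quiver.{0} (VertexRemoved Q v) :=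
  ⟨fun x y => (x.1 ⟶ y.1) ⊕ ((x.1 ⟶ v) × (v ⟶ y.1))⟩

/-! Paths of `Q̄` correspond bijectively to paths of `Q` between vertices other than `v`: a new
arrow expands to the path of length two it replaces, and since there are no loops at `v`, every
passage of a path through `v` is such a path of length two. As `d v = 0`, this identifies
`P_{Q̄,d̄}` with `P_{Q,d}` viewed as a representation of `Q̄`, so it remains to see that restricting
endomorphisms of `P_{Q,d}` to the vertices other than `v` is bijective. Every basis path of
`P_{Q,d}` at `v` ends with an arrow `α : z ⟶ v` with `z ≠ v`, so the component at `v` of an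
endomorphism is determined by, and can be defined from, its component at `z`. -/

theorem QAcyclic.isEmpty_hom_self {Q : Type} [Quiver.{0} Q] (h : QAcyclic Q) (x : Q) :
    IsEmpty (x ⟶ x) :=
  ⟨fun a => Quiver.Path.cons_ne_nil _ _ (h x (Quiver.Path.nil.cons a))⟩

namespace VertexRemoved

variable {Q : Type} [Quiver.{0} Q] {v : Q}

-- The anonymous constructor would give a term of type `{x // x ≠ v}`, whose quiver structure
-- instance search does not see.
def mk (i : Q) (hi : i ≠ v) : VertexRemoved Q v := ⟨i, hi⟩

open Classical in
noncomputable instance [Fintype Q] : Fintype (VertexRemoved Q v) := Subtype.fintype _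

def expandHom {x y : VertexRemoved Q v} : (x ⟶ y) → Quiver.Path x.1 y.1
  | .inl a => a.toPath
  | .inr (α, β) => α.toPath.cons β

def expandPath {i : VertexRemoved Q v} :
    ∀ {m : VertexRemoved Q v}, Quiver.Path i m → Quiver.Path i.1 m.1
  | _, .nil => .nil
  | _, .cons p e => (expandPath p).comp (expandHom e)

@[simp] theorem expandPath_cons_inl {i x m : VertexRemoved Q v} (p : Quiver.Path i x)
    (a : x.1 ⟶ m.1) : expandPath (p.cons (Sum.inl a : x ⟶ m)) = (expandPath p).cons a := rfl

@[simp] theorem expandPath_cons_inr {i x m : VertexRemoved Q v} (p : Quiver.Path i x)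
    (α : x.1 ⟶ v) (β : v ⟶ m.1) :
    expandPath (p.cons (Sum.inr (α, β) : x ⟶ m)) = ((expandPath p).cons α).cons β := rfl

theorem expandPath_injective {i m : VertexRemoved Q v} :
    Function.Injective (expandPath : Quiver.Path i m → Quiver.Path i.1 m.1) := by
  intro p q h
  induction p with
  | nil =>
    cases q with
    | nil => rfl
    | cons q e => rcases e with a | ⟨α, β⟩ <;> exact absurd h (Quiver.Path.nil_ne_cons _ _)
  | @cons x _ p e ih =>
    cases q with
    | nil => rcases e with a | ⟨α, β⟩ <;> exact absurd h (Quiver.Path.cons_ne_nil _ _)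
    | @cons y _ q e' =>
      rcases e with a | ⟨α, β⟩ <;> rcases e' with a' | ⟨α', β'⟩ <;>
        simp only [expandPath_cons_inl, expandPath_cons_inr, Quiver.Path.cons.injEq] at h
      · obtain ⟨hxy, hp, ha⟩ := h
        obtain rfl : x = y := Subtype.ext hxy
        rw [ih (eq_of_heq hp), eq_of_heq ha]
      · exact absurd h.1 x.2
      · exact absurd h.1.symm y.2
      · obtain ⟨-, h, hβ⟩ := h
        simp only [heq_eq_eq, Quiver.Path.cons.injEq] at h hβ
        obtain ⟨hxy, hp, hα⟩ := h
        obtain rfl : x = y := Subtype.ext hxy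
        rw [ih (eq_of_heq hp), eq_of_heq hα, hβ]

theorem expandPath_surjective (hloop : IsEmpty (v ⟶ v)) {i m : VertexRemoved Q v} :
    Function.Surjective (expandPath : Quiver.Path i m → Quiver.Path i.1 m.1) := by
  -- A path ending at `v` only lifts once it is extended by an arrow leaving `v`.
  suffices key : ∀ {b : Q} (p : Quiver.Path i.1 b),
      (∀ hb : b ≠ v, ∃ p' : Quiver.Path i (.mk b hb), expandPath p' = p) ∧
      (∀ (hb : b = v) (m : VertexRemoved Q v) (β : v ⟶ m.1),
        ∃ p' : Quiver.Path i m, expandPath p' = (hb ▸ p).cons β) from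
    fun p => (key p).1 m.2
  intro b p
  induction p with
  | nil => exact ⟨fun _ => ⟨.nil, rfl⟩, fun hb => absurd hb i.2⟩
  | @cons z b q e ih =>
    refine ⟨fun hb => ?_, fun hb m β => ?_⟩
    · by_cases hz : z = v
      · subst hz
        exact ih.2 rfl (.mk b hb) e
      · obtain ⟨q', rfl⟩ := ih.1 hz
        exact ⟨q'.cons (Sum.inl e), rfl⟩
    · subst hb
      have hz : z ≠ b := fun hz => hloop.false (hz ▸ e)
      obtain ⟨q', rfl⟩ := ih.1 hz
      exact ⟨q'.cons (Sum.inr (e, β)), rfl⟩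

noncomputable def expandPathEquiv (hloop : IsEmpty (v ⟶ v)) (i m : VertexRemoved Q v) :
    Quiver.Path i m ≃ Quiver.Path i.1 m.1 :=
  .ofBijective expandPath ⟨expandPath_injective, expandPath_surjective hloop⟩

end VertexRemoved

section Restriction

variable {k : Type} [Field k] {Q : Type} [Quiver.{0} Q]

def QRep.toVertexRemoved (M : QRep k Q) (v : Q) : QRep k (VertexRemoved Q v) where
  V x := M.V x.1
  instAddCommGroup _ := inferInstance
  instModule _ := inferInstance
  map
    | .inl a => M.map a
    | .inr (α, β) => M.map β ∘ₗ M.map α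

namespace QRepHom

variable {M N : QRep k Q}

@[simp] theorem mul_app (f g : QRepHom M M) (x : Q) : (f * g).app x = f.app x ∘ₗ g.app x := rfl

@[simp] theorem add_app (f g : QRepHom M N) (x : Q) : (f + g).app x = f.app x + g.app x := rfl

@[simp] theorem one_app (x : Q) : (1 : QRepHom M M).app x = LinearMap.id := rfl

@[simp] theorem smul_app (c : k) (f : QRepHom M N) (x : Q) : (c • f).app x = c • f.app x := rfl

def toVertexRemoved (f : QRepHom M N) (v : Q) :
    QRepHom (M.toVertexRemoved v) (N.toVertexRemoved v) where
  app x := f.app x.1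
  comm
    | .inl a => f.comm a
    | .inr (α, β) => by
      change (N.map β ∘ₗ N.map α) ∘ₗ f.app _ = f.app _ ∘ₗ (M.map β ∘ₗ M.map α)
      rw [LinearMap.comp_assoc, f.comm α, ← LinearMap.comp_assoc, f.comm β,
        LinearMap.comp_assoc]

section Conj

variable (e : ∀ x, M.V x ≃ₗ[k] N.V x)
  (he : ∀ {x y : Q} (a : x ⟶ y), N.map a ∘ₗ (e x).toLinearMap = (e y).toLinearMap ∘ₗ M.map a)
include he

theorem comm_symm {x y : Q} (a : x ⟶ y) :
    M.map a ∘ₗ (e x).symm.toLinearMap = (e y).symm.toLinearMap ∘ₗ N.map a := by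
  ext u
  have h := LinearMap.congr_fun (he a) ((e x).symm u)
  simp only [LinearMap.comp_apply, LinearEquiv.coe_coe, LinearEquiv.apply_symm_apply] at h ⊢
  rw [h, LinearEquiv.symm_apply_apply]

def conj (f : QRepHom M M) : QRepHom N N where
  app x := (e x).toLinearMap ∘ₗ f.app x ∘ₗ (e x).symm.toLinearMap
  comm a := by
    ext u
    have h₁ := LinearMap.congr_fun (he a)
    have h₂ := LinearMap.congr_fun (f.comm a)
    have h₃ := LinearMap.congr_fun (comm_symm e he a)
    simp only [LinearMap.comp_apply, LinearEquiv.coe_coe] at h₁ h₂ h₃ ⊢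
    rw [h₁, h₂, h₃]

def conjEquiv : QRepHom M M ≃ QRepHom N N where
  toFun := conj e he
  invFun := conj (fun x => (e x).symm) (comm_symm e he)
  left_inv f := by ext x u; simp [conj]
  right_inv g := by ext x u; simp [conj]

theorem conjEquiv_mul (f g : QRepHom M M) :
    conjEquiv e he (f * g) = conjEquiv e he f * conjEquiv e he g := by
  ext x u; simp [conjEquiv, conj]

theorem conjEquiv_add (f g : QRepHom M M) :
    conjEquiv e he (f + g) = conjEquiv e he f + conjEquiv e he g := by
  ext x u; simp [conjEquiv, conj]

theorem conjEquiv_one : conjEquiv e he 1 = 1 := by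
  ext x u; simp [conjEquiv, conj]

theorem conjEquiv_smul (c : k) (f : QRepHom M M) :
    conjEquiv e he (c • f) = c • conjEquiv e he f := by
  ext x u; simp [conjEquiv, conj]

end Conj

end QRepHom

end Restriction

theorem QProjD.ne_of_summand {Q : Type} {d : Q → ℕ} {v : Q} (hv : d v = 0) {i : Q}
    (s : Fin (d i)) : i ≠ v := by
  rintro rfl
  exact (hv ▸ s).elim0

namespace QProjD

variable {k : Type} [Field k] {Q : Type} [Quiver.{0} Q] [Fintype Q] {d : Q → ℕ} {v : Q}

variable (k d) in
noncomputable def basis (m : Q) :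
    Module.Basis (Σ i, Σ _ : Fin (d i), Quiver.Path i m) k ((QProjD k Q d).V m) :=
  Pi.basis fun _ => Pi.basis fun _ => Finsupp.basisSingleOne

theorem basis_apply [DecidableEq Q] {m : Q} (j : Σ i, Σ _ : Fin (d i), Quiver.Path i m) :
    basis k d m j = Pi.single j.1 (Pi.single j.2.1 (Finsupp.single j.2.2 1)) := by
  erw [basis, Pi.basis_apply, Pi.basis_apply]
  rfl

theorem map_basis {m m' : Q} (a : m ⟶ m') (i : Q) (s : Fin (d i)) (p : Quiver.Path i m) :
    (QProjD k Q d).map a (basis k d m ⟨i, s, p⟩) = basis k d m' ⟨i, s, p.cons a⟩ := by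
  classical
  simp only [basis_apply]
  funext j t
  show Finsupp.mapDomain _ (Pi.single (M := fun j => Fin (d j) → (Quiver.Path j m →₀ k)) i
    (Pi.single s (Finsupp.single p 1)) j t) = _
  rcases eq_or_ne j i with rfl | hj
  · rcases eq_or_ne t s with rfl | ht
    · simp
    · simp [ht]
  · simp [hj]

noncomputable def basisIndexEquiv (hloop : IsEmpty (v ⟶ v)) (hv : d v = 0)
    (x : VertexRemoved Q v) :
    (Σ i : VertexRemoved Q v, Σ _ : Fin (d i.1), Quiver.Path i x) ≃
      Σ i : Q, Σ _ : Fin (d i), Quiver.Path i x.1 where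
  toFun j := ⟨j.1.1, j.2.1, VertexRemoved.expandPathEquiv hloop j.1 x j.2.2⟩
  invFun j := ⟨⟨j.1, ne_of_summand hv j.2.1⟩, j.2.1,
    (VertexRemoved.expandPathEquiv hloop ⟨j.1, ne_of_summand hv j.2.1⟩ x).symm j.2.2⟩
  left_inv := by
    rintro ⟨⟨i, hi⟩, s, p⟩
    simp
  right_inv := by
    rintro ⟨i, s, p⟩
    simp

noncomputable def vertexRemovedEquiv (hloop : IsEmpty (v ⟶ v)) (hv : d v = 0)
    (x : VertexRemoved Q v) :
    (QProjD k (VertexRemoved Q v) fun i => d i.1).V x ≃ₗ[k]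
      ((QProjD k Q d).toVertexRemoved v).V x :=
  (basis k _ x).equiv (basis k d x.1) (basisIndexEquiv hloop hv x)

theorem vertexRemovedEquiv_comm (hloop : IsEmpty (v ⟶ v)) (hv : d v = 0)
    {x y : VertexRemoved Q v} (a : x ⟶ y) :
    ((QProjD k Q d).toVertexRemoved v).map a ∘ₗ (vertexRemovedEquiv hloop hv x).toLinearMap =
      (vertexRemovedEquiv hloop hv y).toLinearMap ∘ₗ
        (QProjD k (VertexRemoved Q v) fun i => d i.1).map a := by
  refine (basis k _ x).ext fun j => ?_
  rw [LinearMap.comp_apply, LinearMap.comp_apply, LinearEquiv.coe_coe, LinearEquiv.coe_coe]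
  obtain ⟨⟨i, hi⟩, s, p⟩ := j
  erw [Module.Basis.equiv_apply, map_basis, Module.Basis.equiv_apply]
  rcases a with a | ⟨α, β⟩
  · exact map_basis a _ _ _
  · exact (congrArg _ (map_basis α _ _ _)).trans (map_basis β _ _ _)

section Extension

variable (g : QRepHom ((QProjD k Q d).toVertexRemoved v) ((QProjD k Q d).toVertexRemoved v))

/-- The basis path `q.cons α` is `α` applied to `q`, so an extension of `g` must send it to
`α (g_z q)`. The remaining cases (`z = v`, or the empty path) do not occur when there are no loops
at `v` and `d v = 0`. -/
noncomputable def extendAt : (QProjD k Q d).V v →ₗ[k] (QProjD k Q d).V v :=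
  open Classical in
  (basis k d v).constr k fun
    | ⟨i, s, @Quiver.Path.cons _ _ _ z _ q α⟩ =>
      if hz : z = v then 0 else (QProjD k Q d).map α (g.app (.mk z hz) (basis k d z ⟨i, s, q⟩))
    | ⟨_, _, .nil⟩ => 0

theorem extendAt_basis_cons {i : Q} (s : Fin (d i)) (z : VertexRemoved Q v)
    (q : Quiver.Path i z.1) (α : z.1 ⟶ v) :
    extendAt g (basis k d v ⟨i, s, q.cons α⟩) =
      (QProjD k Q d).map α (g.app z (basis k d z.1 ⟨i, s, q⟩)) := by
  simp [extendAt, z.2]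
  rfl

theorem map_comp_extendAt (hloop : IsEmpty (v ⟶ v)) (hv : d v = 0) (y : VertexRemoved Q v)
    (β : v ⟶ y.1) :
    (QProjD k Q d).map β ∘ₗ extendAt g = g.app y ∘ₗ (QProjD k Q d).map β := by
  refine (basis k d v).ext fun ⟨i, s, p⟩ => ?_
  cases p with
  | nil => exact absurd rfl (ne_of_summand hv s)
  | @cons z _ q α =>
    have hz : z ≠ v := fun h => hloop.false (h ▸ α)
    have hg := LinearMap.congr_fun (g.comm (i := .mk z hz) (Sum.inr (α, β) : _ ⟶ y))
      (basis k d z ⟨i, s, q⟩)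
    exact (congrArg ((QProjD k Q d).map β) (extendAt_basis_cons g s (.mk z hz) q α)).trans
      (hg.trans (congrArg (fun u => g.app y ((QProjD k Q d).map β u)) (map_basis α i s q)))

theorem extendAt_comp_map (x : VertexRemoved Q v) (α : x.1 ⟶ v) :
    (QProjD k Q d).map α ∘ₗ g.app x = extendAt g ∘ₗ (QProjD k Q d).map α := by
  refine (basis k d x.1).ext fun ⟨i, s, q⟩ => ?_
  exact ((congrArg (extendAt g) (map_basis α i s q)).trans
    (extendAt_basis_cons g s x q α)).symm

open Classical in
noncomputable def extendApp (x : Q) : (QProjD k Q d).V x →ₗ[k] (QProjD k Q d).V x :=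
  if hx : x = v then hx ▸ extendAt g else g.app (.mk x hx)

theorem extendApp_self : extendApp g v = extendAt g :=
  dif_pos rfl

theorem extendApp_of_ne {x : Q} (hx : x ≠ v) : extendApp g x = g.app (.mk x hx) :=
  dif_neg hx

noncomputable def extend (hloop : IsEmpty (v ⟶ v)) (hv : d v = 0) :
    QRepHom (QProjD k Q d) (QProjD k Q d) where
  app := extendApp g
  comm {x y} a := by
    by_cases hx : x = v <;> by_cases hy : y = v
    · subst hx hy
      exact hloop.elim a
    · subst hx
      rw [extendApp_self, extendApp_of_ne g hy]
      exact map_comp_extendAt g hloop hv (.mk y hy) a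
    · subst hy
      rw [extendApp_self, extendApp_of_ne g hx]
      exact extendAt_comp_map g (.mk x hx) a
    · rw [extendApp_of_ne g hx, extendApp_of_ne g hy]
      exact g.comm (i := .mk x hx) (j := .mk y hy) (Sum.inl a)

theorem toVertexRemoved_extend (hloop : IsEmpty (v ⟶ v)) (hv : d v = 0) :
    (extend g hloop hv).toVertexRemoved v = g := by
  ext x : 2
  exact extendApp_of_ne g x.2

end Extension

theorem toVertexRemoved_injective (hloop : IsEmpty (v ⟶ v)) (hv : d v = 0) :
    Function.Injective fun f : QRepHom (QProjD k Q d) (QProjD k Q d) => f.toVertexRemoved v := by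
  intro f f' h
  have happ {x : Q} (hx : x ≠ v) : f.app x = f'.app x := congrArg (QRepHom.app · (.mk x hx)) h
  ext x : 2
  by_cases hx : x = v
  · subst hx
    refine (basis k d x).ext fun ⟨i, s, p⟩ => ?_
    cases p with
    | nil => exact absurd rfl (ne_of_summand hv s)
    | @cons z _ q α =>
      have hz : z ≠ x := fun h => hloop.false (h ▸ α)
      rw [← map_basis, ← LinearMap.comp_apply, ← f.comm, LinearMap.comp_apply,
        happ hz, ← LinearMap.comp_apply, f'.comm, LinearMap.comp_apply]
  · exact happ hx

noncomputable def endEquivToVertexRemoved (hloop : IsEmpty (v ⟶ v)) (hv : d v = 0) :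
    QRepHom (QProjD k Q d) (QProjD k Q d) ≃
      QRepHom ((QProjD k Q d).toVertexRemoved v) ((QProjD k Q d).toVertexRemoved v) :=
  .ofBijective (·.toVertexRemoved v) ⟨toVertexRemoved_injective hloop hv,
    fun g => ⟨extend g hloop hv, toVertexRemoved_extend g hloop hv⟩⟩

end QProjD

/-- Zero-vertex removal: if `d v = 0`, then `End(P_{Q,d}) ≅ End(P_{Q̄,d̄})` as
`k`-algebras, where `Q̄` removes `v` and replaces paths of length two through `v` by
arrows, and `d̄` is the restriction of `d`. -/
theorem stmt_13 (k : Type) [Field k] (Q : Type) [Quiver.{0} Q] [Fintype Q]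
    (hacyclic : QAcyclic Q) (d : Q → ℕ) (v : Q) (hv : d v = 0) :
    ∃ e : QRepHom (QProjD k Q d) (QProjD k Q d) ≃
        QRepHom (QProjD k (VertexRemoved Q v) fun x => d x.1)
          (QProjD k (VertexRemoved Q v) fun x => d x.1),
      (∀ x y, e (x * y) = e x * e y) ∧ (∀ x y, e (x + y) = e x + e y) ∧
        e 1 = 1 ∧ ∀ (c : k) x, e (c • x) = c • e x := by
  have hloop := hacyclic.isEmpty_hom_self v
  have hiso {x y : VertexRemoved Q v} (a : x ⟶ y) :=
    QRepHom.comm_symm _ (QProjD.vertexRemovedEquiv_comm (k := k) hloop hv) a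
  refine ⟨(QProjD.endEquivToVertexRemoved hloop hv).trans (QRepHom.conjEquiv _ hiso),
    fun f g => ?_, fun f g => ?_, ?_, fun c f => ?_⟩
  · exact QRepHom.conjEquiv_mul _ hiso (f.toVertexRemoved v) (g.toVertexRemoved v)
  · exact QRepHom.conjEquiv_add _ hiso (f.toVertexRemoved v) (g.toVertexRemoved v)
  · exact QRepHom.conjEquiv_one _ hiso
  · exact QRepHom.conjEquiv_smul _ hiso c (f.toVertexRemoved v)
end

section
/- Let Q be a finite acyclic quiver on vertices {1,...,n} such that every arrow i→j satisfies i<j and n is the only sink. Let P_{Q,d} be a projective representation with underlying vector space V = ⊕_{i=1}^n V_i. Then the map End(P_{Q,d}) → End(V_n) sending f = (f_1,...,f_n) to its component f_n at vertex n is injective. -/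
/-!
Arrows act injectively on `P_{Q,d}`, since prefixing a path by an arrow is injective on paths.
So if `a : i ⟶ j`, the relation `map a ∘ f_i = f_j ∘ map a` determines `f_i` from `f_j`;
as every vertex other than `n` has an arrow to a strictly larger vertex, descending induction
from the sink recovers all of `f` from `f_n`.
-/

theorem QProjD.map_injective (k : Type) [Field k] {Q : Type} [Quiver.{0} Q] (d : Q → ℕ)
    {i j : Q} (a : i ⟶ j) : Function.Injective ((QProjD k Q d).map a) := by
  intro x y hxy
  funext l s
  have hls : (x l s).mapDomain (·.cons a) = (y l s).mapDomain (·.cons a) :=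
    congr_fun (congr_fun hxy l) s
  exact Finsupp.mapDomain_injective
    (fun _ _ h => eq_of_heq (Quiver.Path.heq_of_cons_eq_cons h)) hls

theorem QRepHom.app_eq_of_map_injective {k : Type} [Field k] {Q : Type} [Quiver.{0} Q]
    {M N : QRep k Q} {f g : QRepHom M N} {i j : Q} (a : i ⟶ j)
    (ha : Function.Injective (N.map a)) (hj : f.app j = g.app j) : f.app i = g.app i := by
  ext x
  apply ha
  calc N.map a (f.app i x) = f.app j (M.map a x) := LinearMap.congr_fun (f.comm a) x
    _ = g.app j (M.map a x) := by rw [hj]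
    _ = N.map a (g.app i x) := (LinearMap.congr_fun (g.comm a) x).symm

/-- For an oriented quiver on vertices `0 < 1 < ⋯ < n` (arrows only increase, and the
last vertex is the only sink), the evaluation `f ↦ f_n` of an endomorphism of the
projective representation `P_{Q,d}` at the unique sink is injective. -/
theorem stmt_19 (k : Type) [Field k] (n : ℕ) [Quiver.{0} (Fin (n + 1))]
    [∀ i j : Fin (n + 1), Fintype (i ⟶ j)]
    (harrow : ∀ i j : Fin (n + 1), (i ⟶ j) → i < j)
    (hsink : ∀ i : Fin (n + 1), i ≠ Fin.last n → ∃ j, Nonempty (i ⟶ j))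
    (d : Fin (n + 1) → ℕ) :
    Function.Injective
      (fun f : QRepHom (QProjD k (Fin (n + 1)) d) (QProjD k (Fin (n + 1)) d) =>
        f.app (Fin.last n)) := by
  intro f g hfg
  ext i : 2
  induction i using WellFoundedGT.induction with
  | _ i ih =>
    by_cases hi : i = Fin.last n
    · subst hi
      exact hfg
    · obtain ⟨j, ⟨a⟩⟩ := hsink i hi
      exact QRepHom.app_eq_of_map_injective a (QProjD.map_injective k d a) (ih j (harrow i j a))
end
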